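/- arXiv:1911.09291 — 8 statements merged into one kernel-verified Lean document; each statement's English description precedes it below -/
import Mathlib

section
/- For a finite MDP with discount factor γ in [0,1), the operator F on the space of bounded pseudometrics on the state space, defined by F(d)(s,t) = max over actions a of (|R(s,a) − R(t,a)| + γ·W₁(d)(P(s,a), P(t,a))), where W₁(d) is the 1-Wasserstein distance with ground cost d, is a γ-contraction in the supremum norm. -/
open Finset

def IsProb {S : Type*} [Fintype S] (μ : S → ℝ) : Prop :=
  (∀ s, 0 ≤ μ s) ∧ ∑ s, μ s = 1

def IsCoupling {S : Type*} [Fintype S] (l : S → S → ℝ) (μ ν : S → ℝ) : Prop :=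
  (∀ s t, 0 ≤ l s t) ∧ (∀ s, ∑ t, l s t = μ s) ∧ (∀ t, ∑ s, l s t = ν t)

noncomputable def W1 {S : Type*} [Fintype S] (d : S → S → ℝ) (μ ν : S → ℝ) : ℝ :=
  sInf {c | ∃ l, IsCoupling l μ ν ∧ c = ∑ s, ∑ t, l s t * d s t}

def IsPseudometric {S : Type*} (d : S → S → ℝ) : Prop :=
  (∀ s t, 0 ≤ d s t) ∧ (∀ s, d s s = 0) ∧ (∀ s t, d s t = d t s) ∧
    (∀ s t u, d s u ≤ d s t + d t u)

noncomputable def bisimF {S A : Type*} [Fintype S] [Fintype A] [Nonempty A]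
    (R : S → A → ℝ) (P : S → A → S → ℝ) (γ : ℝ) (d : S → S → ℝ) : S → S → ℝ :=
  fun s t => univ.sup' univ_nonempty
    (fun a => |R s a - R t a| + γ * W1 d (P s a) (P t a))

noncomputable def supDist {S : Type*} [Fintype S] [Nonempty S]
    (d d' : S → S → ℝ) : ℝ :=
  univ.sup' univ_nonempty (fun p : S × S => |d p.1 p.2 - d' p.1 p.2|)

def Rpi {S A : Type*} [Fintype A] (R : S → A → ℝ) (pol : S → A → ℝ) (s : S) : ℝ :=
  ∑ a, pol s a * R s a

def Ppi {S A : Type*} [Fintype A] (P : S → A → S → ℝ) (pol : S → A → ℝ)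
    (s s' : S) : ℝ :=
  ∑ a, pol s a * P s a s'

noncomputable def piF {S A : Type*} [Fintype S] [Fintype A]
    (R : S → A → ℝ) (P : S → A → S → ℝ) (pol : S → A → ℝ) (γ : ℝ)
    (d : S → S → ℝ) : S → S → ℝ :=
  fun s t => |Rpi R pol s - Rpi R pol t| + γ * W1 d (Ppi P pol s) (Ppi P pol t)

lemma coupling_exists {S : Type*} [Fintype S] {μ ν : S → ℝ}
    (hμ : IsProb μ) (hν : IsProb ν) :
    IsCoupling (fun s t => μ s * ν t) μ ν := by
  refine ⟨fun s t => mul_nonneg (hμ.1 s) (hν.1 t), fun s => ?_, fun t => ?_⟩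
  · rw [← Finset.mul_sum, hν.2, mul_one]
  · rw [← Finset.sum_mul, hμ.2, one_mul]

lemma W1_set_nonempty {S : Type*} [Fintype S] (d : S → S → ℝ) {μ ν : S → ℝ}
    (hμ : IsProb μ) (hν : IsProb ν) :
    {c | ∃ l, IsCoupling l μ ν ∧ c = ∑ s, ∑ t, l s t * d s t}.Nonempty :=
  ⟨_, _, coupling_exists hμ hν, rfl⟩

lemma W1_set_bddBelow {S : Type*} [Fintype S] {d : S → S → ℝ}
    (hd : ∀ s t, 0 ≤ d s t) (μ ν : S → ℝ) :
    BddBelow {c | ∃ l, IsCoupling l μ ν ∧ c = ∑ s, ∑ t, l s t * d s t} := by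
  refine ⟨0, fun c hc => ?_⟩
  obtain ⟨l, hl, rfl⟩ := hc
  exact Finset.sum_nonneg fun s _ => Finset.sum_nonneg fun t _ =>
    mul_nonneg (hl.1 s t) (hd s t)

lemma W1_diff_le {S : Type*} [Fintype S] {d d' : S → S → ℝ} {c : ℝ}
    (hd : ∀ s t, 0 ≤ d s t)
    (hc : ∀ s t, d s t ≤ d' s t + c) {μ ν : S → ℝ}
    (hμ : IsProb μ) (hν : IsProb ν) :
    W1 d μ ν ≤ W1 d' μ ν + c := by
  rw [← sub_le_iff_le_add]
  show W1 d μ ν - c ≤ sInf {c | ∃ l, IsCoupling l μ ν ∧ c = ∑ s, ∑ t, l s t * d' s t}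
  apply le_csInf (W1_set_nonempty d' hμ hν)
  rintro b ⟨l, hl, rfl⟩
  rw [sub_le_iff_le_add]
  have h1 : W1 d μ ν ≤ ∑ s, ∑ t, l s t * d s t :=
    csInf_le (W1_set_bddBelow hd μ ν) ⟨l, hl, rfl⟩
  have hsum : ∑ s, ∑ t, l s t = 1 := by
    simp only [hl.2.1]; exact hμ.2
  have h2 : ∑ s, ∑ t, l s t * d s t ≤ (∑ s, ∑ t, l s t * d' s t) + c := by
    calc ∑ s, ∑ t, l s t * d s t
        ≤ ∑ s, ∑ t, (l s t * d' s t + l s t * c) := by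
          refine Finset.sum_le_sum fun s _ => Finset.sum_le_sum fun t _ => ?_
          rw [← mul_add]
          exact mul_le_mul_of_nonneg_left (hc s t) (hl.1 s t)
      _ = (∑ s, ∑ t, l s t * d' s t) + (∑ s, ∑ t, l s t) * c := by
          rw [Finset.sum_mul, ← Finset.sum_add_distrib]
          congr 1; funext s
          rw [Finset.sum_mul, ← Finset.sum_add_distrib]
      _ = _ := by rw [hsum, one_mul]
  linarith

theorem bisimF_contraction {S A : Type*} [Fintype S] [Fintype A] [Nonempty S] [Nonempty A]
    (R : S → A → ℝ) (P : S → A → S → ℝ) (hP : ∀ s a, IsProb (P s a))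
    (γ : ℝ) (hγ0 : 0 ≤ γ) (hγ1 : γ < 1)
    (d d' : S → S → ℝ) (hd : IsPseudometric d) (hd' : IsPseudometric d') :
    supDist (bisimF R P γ d) (bisimF R P γ d') ≤ γ * supDist d d' := by
  set c := supDist d d' with hc
  have hcd : ∀ s t, d s t ≤ d' s t + c := by
    intro s t
    have : |d s t - d' s t| ≤ c :=
      Finset.le_sup' (fun p : S × S => |d p.1 p.2 - d' p.1 p.2|)
        (Finset.mem_univ (s, t))
    have := abs_le.mp this
    linarith [this.2]
  have hcd' : ∀ s t, d' s t ≤ d s t + c := by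
    intro s t
    have : |d s t - d' s t| ≤ c :=
      Finset.le_sup' (fun p : S × S => |d p.1 p.2 - d' p.1 p.2|)
        (Finset.mem_univ (s, t))
    have := abs_le.mp this
    linarith [this.1]
  have hW : ∀ s t a, |W1 d (P s a) (P t a) - W1 d' (P s a) (P t a)| ≤ c := by
    intro s t a
    rw [abs_sub_le_iff]
    constructor
    · linarith [W1_diff_le hd.1 hcd (hP s a) (hP t a)]
    · linarith [W1_diff_le hd'.1 hcd' (hP s a) (hP t a)]
  apply Finset.sup'_le
  rintro ⟨s, t⟩ -
  rw [abs_sub_le_iff]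
  constructor
  · apply sub_le_iff_le_add.mpr
    apply Finset.sup'_le
    intro a _
    have h1 : |R s a - R t a| + γ * W1 d' (P s a) (P t a) ≤ bisimF R P γ d' s t :=
      Finset.le_sup' (fun a => |R s a - R t a| + γ * W1 d' (P s a) (P t a))
        (Finset.mem_univ a)
    have h2 := hW s t a
    rw [abs_sub_le_iff] at h2
    nlinarith [h2.1, h2.2]
  · apply sub_le_iff_le_add.mpr
    apply Finset.sup'_le
    intro a _
    have h1 : |R s a - R t a| + γ * W1 d (P s a) (P t a) ≤ bisimF R P γ d s t :=
      Finset.le_sup' (fun a => |R s a - R t a| + γ * W1 d (P s a) (P t a))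
        (Finset.mem_univ a)
    have h2 := hW s t a
    rw [abs_sub_le_iff] at h2
    nlinarith [h2.1, h2.2]
end

section
/- For a finite MDP with discount γ ∈ [0,1), the operator F(d)(s,t) = max_a (|R(s,a) − R(t,a)| + γ·W₁(d)(P(s,a), P(t,a))) has a unique fixed point d∼ on the space of bounded pseudometrics, and d∼ is itself a pseudometric. -/
open Finset

section aux
variable {S : Type*} [Fintype S] {μ ν ρ : S → ℝ} {d d' : S → S → ℝ} {B : ℝ}

lemma isCoupling_prod (hμ : IsProb μ) (hν : IsProb ν) :
    IsCoupling (fun s t => μ s * ν t) μ ν := by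
  refine ⟨fun s t => mul_nonneg (hμ.1 s) (hν.1 t), fun s => ?_, fun t => ?_⟩
  · rw [← Finset.mul_sum, hν.2, mul_one]
  · rw [← Finset.sum_mul, hμ.2, one_mul]

lemma costSet_nonempty (hμ : IsProb μ) (hν : IsProb ν) :
    {c | ∃ l, IsCoupling l μ ν ∧ c = ∑ s, ∑ t, l s t * d s t}.Nonempty :=
  ⟨_, _, isCoupling_prod hμ hν, rfl⟩

lemma coupling_total (hμ : IsProb μ) {l : S → S → ℝ} (hl : IsCoupling l μ ν) :
    ∑ s, ∑ t, l s t = 1 := by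
  rw [Finset.sum_congr rfl fun s _ => hl.2.1 s, hμ.2]

lemma cost_ge {m : ℝ} (hμ : IsProb μ) {l : S → S → ℝ} (hl : IsCoupling l μ ν)
    (hm : ∀ s t, m ≤ d s t) : m ≤ ∑ s, ∑ t, l s t * d s t := by
  calc m = (∑ s, ∑ t, l s t) * m := by rw [coupling_total hμ hl, one_mul]
    _ = ∑ s, ∑ t, l s t * m := by simp_rw [Finset.sum_mul]
    _ ≤ ∑ s, ∑ t, l s t * d s t :=
        Finset.sum_le_sum fun s _ => Finset.sum_le_sum fun t _ =>
          mul_le_mul_of_nonneg_left (hm s t) (hl.1 s t)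

lemma costSet_bddBelow [Nonempty S] (hμ : IsProb μ) :
    BddBelow {c | ∃ l, IsCoupling l μ ν ∧ c = ∑ s, ∑ t, l s t * d s t} := by
  refine ⟨univ.inf' univ_nonempty (fun p : S × S => d p.1 p.2), ?_⟩
  rintro c ⟨l, hl, rfl⟩
  exact cost_ge hμ hl fun s t => Finset.inf'_le _ (mem_univ ((s, t) : S × S))

lemma W1_le_cost [Nonempty S] (hμ : IsProb μ) {l : S → S → ℝ} (hl : IsCoupling l μ ν) :
    W1 d μ ν ≤ ∑ s, ∑ t, l s t * d s t :=
  csInf_le (costSet_bddBelow hμ) ⟨l, hl, rfl⟩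

lemma W1_le_W1_add [Nonempty S] (hμ : IsProb μ) (hν : IsProb ν)
    (hB : ∀ s t, d s t ≤ d' s t + B) : W1 d μ ν ≤ W1 d' μ ν + B := by
  rw [← sub_le_iff_le_add, W1]
  refine le_csInf (costSet_nonempty hμ hν) ?_
  rintro c ⟨l, hl, rfl⟩
  rw [sub_le_iff_le_add]
  calc W1 d μ ν ≤ ∑ s, ∑ t, l s t * d s t := W1_le_cost hμ hl
    _ ≤ ∑ s, ∑ t, l s t * (d' s t + B) :=
        Finset.sum_le_sum fun s _ => Finset.sum_le_sum fun t _ =>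
          mul_le_mul_of_nonneg_left (hB s t) (hl.1 s t)
    _ = (∑ s, ∑ t, l s t * d' s t) + (∑ s, ∑ t, l s t) * B := by
        simp_rw [mul_add, Finset.sum_add_distrib, Finset.sum_mul]
    _ = (∑ s, ∑ t, l s t * d' s t) + B := by rw [coupling_total hμ hl, one_mul]

lemma abs_W1_sub_le [Nonempty S] (hμ : IsProb μ) (hν : IsProb ν)
    (hB : ∀ s t, |d s t - d' s t| ≤ B) : |W1 d μ ν - W1 d' μ ν| ≤ B := by
  rw [abs_sub_le_iff]
  constructor
  · have := W1_le_W1_add (d := d) (d' := d') hμ hν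
      (fun s t => by have := (abs_le.1 (hB s t)).2; linarith)
    linarith
  · have := W1_le_W1_add (d := d') (d' := d) hμ hν
      (fun s t => by have := (abs_le.1 (hB s t)).1; linarith)
    linarith

lemma W1_nonneg (hμ : IsProb μ) (hν : IsProb ν) (hd : ∀ s t, 0 ≤ d s t) :
    0 ≤ W1 d μ ν := by
  refine le_csInf (costSet_nonempty hμ hν) ?_
  rintro c ⟨l, hl, rfl⟩
  exact Finset.sum_nonneg fun s _ => Finset.sum_nonneg fun t _ =>
    mul_nonneg (hl.1 s t) (hd s t)

lemma W1_self [Nonempty S] (hμ : IsProb μ) (hdiag : ∀ s, d s s = 0)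
    (hd : ∀ s t, 0 ≤ d s t) : W1 d μ μ = 0 := by
  classical
  refine le_antisymm ?_ (W1_nonneg hμ hμ hd)
  have hl : IsCoupling (fun s t => if s = t then μ s else 0) μ μ := by
    refine ⟨fun s t => ?_, fun s => ?_, fun t => ?_⟩
    · dsimp only; split <;> simp [hμ.1 s]
    · simp
    · simp
  calc W1 d μ μ ≤ ∑ s, ∑ t, (if s = t then μ s else 0) * d s t := W1_le_cost hμ hl
    _ = 0 := by
        refine Finset.sum_eq_zero fun s _ => Finset.sum_eq_zero fun t _ => ?_
        rcases eq_or_ne s t with rfl | h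
        · simp [hdiag]
        · simp [h]

lemma W1_symm (hsymm : ∀ s t, d s t = d t s) (μ ν : S → ℝ) : W1 d μ ν = W1 d ν μ := by
  have key : ∀ μ ν : S → ℝ,
      {c | ∃ l, IsCoupling l μ ν ∧ c = ∑ s, ∑ t, l s t * d s t} ⊆
      {c | ∃ l, IsCoupling l ν μ ∧ c = ∑ s, ∑ t, l s t * d s t} := by
    rintro μ ν c ⟨l, hl, rfl⟩
    refine ⟨fun t s => l s t, ⟨fun t s => hl.1 s t, hl.2.2, hl.2.1⟩, ?_⟩
    rw [Finset.sum_comm]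
    exact Finset.sum_congr rfl fun s _ => Finset.sum_congr rfl fun t _ => by rw [hsymm]
  unfold W1
  exact congrArg sInf (le_antisymm (key μ ν) (key ν μ))

lemma W1_triangle [Nonempty S] (hd : IsPseudometric d)
    (hμ : IsProb μ) (hν : IsProb ν) (hρ : IsProb ρ) :
    W1 d μ ρ ≤ W1 d μ ν + W1 d ν ρ := by
  obtain ⟨hd0, hdiag, hdsymm, hdtri⟩ := hd
  -- core gluing
  have core : ∀ l1 l2 : S → S → ℝ, IsCoupling l1 μ ν → IsCoupling l2 ν ρ →
      W1 d μ ρ ≤ (∑ s, ∑ t, l1 s t * d s t) + (∑ t, ∑ u, l2 t u * d t u) := by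
    intro l1 l2 hl1 hl2
    set l : S → S → ℝ := fun s u => ∑ t, l1 s t * l2 t u / ν t with hldef
    have hν1 : ∀ t, ν t = 0 → ∀ s, l1 s t = 0 := by
      intro t ht s
      refine (Finset.sum_eq_zero_iff_of_nonneg (fun s _ => hl1.1 s t)).1 ?_ s (mem_univ s)
      rw [hl1.2.2 t, ht]
    have hν2 : ∀ t, ν t = 0 → ∀ u, l2 t u = 0 := by
      intro t ht u
      refine (Finset.sum_eq_zero_iff_of_nonneg (fun u _ => hl2.1 t u)).1 ?_ u (mem_univ u)
      rw [hl2.2.1 t, ht]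
    have hlc : IsCoupling l μ ρ := by
      refine ⟨fun s u => Finset.sum_nonneg fun t _ =>
        div_nonneg (mul_nonneg (hl1.1 s t) (hl2.1 t u)) (hν.1 t), fun s => ?_, fun u => ?_⟩
      · rw [Finset.sum_comm]
        rw [← hl1.2.1 s]
        refine Finset.sum_congr rfl fun t _ => ?_
        have : ∑ u, l1 s t * l2 t u / ν t = l1 s t * (∑ u, l2 t u) / ν t := by
          rw [Finset.mul_sum, Finset.sum_div]
        rw [this, hl2.2.1 t]
        rcases eq_or_ne (ν t) 0 with h | h
        · simp [hν1 t h s, h]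
        · rw [mul_div_assoc, div_self h, mul_one]
      · rw [Finset.sum_comm]
        rw [← hl2.2.2 u]
        refine Finset.sum_congr rfl fun t _ => ?_
        have : ∑ s, l1 s t * l2 t u / ν t = (∑ s, l1 s t) * l2 t u / ν t := by
          rw [Finset.sum_mul, Finset.sum_div]
        rw [this, hl1.2.2 t]
        rcases eq_or_ne (ν t) 0 with h | h
        · simp [hν2 t h u, h]
        · rw [mul_comm, mul_div_assoc, div_self h, mul_one]
    have hX : ∀ s t, ∑ u, l1 s t * l2 t u / ν t * d s t = l1 s t * d s t := by
      intro s t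
      have h1 : ∑ u, l1 s t * l2 t u / ν t * d s t
          = l1 s t * d s t * (∑ u, l2 t u) / ν t := by
        rw [Finset.mul_sum, Finset.sum_div]
        exact Finset.sum_congr rfl fun u _ => by ring
      rw [h1, hl2.2.1 t]
      rcases eq_or_ne (ν t) 0 with h | h
      · simp [hν1 t h s, h]
      · rw [mul_div_assoc, div_self h, mul_one]
    have hY : ∀ t u, ∑ s, l1 s t * l2 t u / ν t * d t u = l2 t u * d t u := by
      intro t u
      have h1 : ∑ s, l1 s t * l2 t u / ν t * d t u
          = l2 t u * d t u * (∑ s, l1 s t) / ν t := by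
        rw [Finset.mul_sum, Finset.sum_div]
        exact Finset.sum_congr rfl fun s _ => by ring
      rw [h1, hl1.2.2 t]
      rcases eq_or_ne (ν t) 0 with h | h
      · simp [hν2 t h u, h]
      · rw [mul_div_assoc, div_self h, mul_one]
    calc W1 d μ ρ ≤ ∑ s, ∑ u, l s u * d s u := W1_le_cost hμ hlc
      _ = ∑ s, ∑ u, ∑ t, l1 s t * l2 t u / ν t * d s u := by
          simp_rw [hldef, Finset.sum_mul]
      _ ≤ ∑ s, ∑ u, ∑ t, l1 s t * l2 t u / ν t * (d s t + d t u) :=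
          Finset.sum_le_sum fun s _ => Finset.sum_le_sum fun u _ =>
            Finset.sum_le_sum fun t _ => mul_le_mul_of_nonneg_left (hdtri s t u)
              (div_nonneg (mul_nonneg (hl1.1 s t) (hl2.1 t u)) (hν.1 t))
      _ = (∑ s, ∑ u, ∑ t, l1 s t * l2 t u / ν t * d s t)
          + (∑ s, ∑ u, ∑ t, l1 s t * l2 t u / ν t * d t u) := by
          simp_rw [mul_add, Finset.sum_add_distrib]
      _ = (∑ s, ∑ t, l1 s t * d s t) + (∑ t, ∑ u, l2 t u * d t u) := by
          congr 1
          · exact Finset.sum_congr rfl fun s _ =>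
              (Finset.sum_comm).trans
                (Finset.sum_congr rfl fun t _ => hX s t)
          · calc ∑ s, ∑ u, ∑ t, l1 s t * l2 t u / ν t * d t u
                = ∑ u, ∑ s, ∑ t, l1 s t * l2 t u / ν t * d t u := Finset.sum_comm
              _ = ∑ u, ∑ t, ∑ s, l1 s t * l2 t u / ν t * d t u :=
                  Finset.sum_congr rfl fun u _ => Finset.sum_comm
              _ = ∑ t, ∑ u, ∑ s, l1 s t * l2 t u / ν t * d t u := Finset.sum_comm
              _ = ∑ t, ∑ u, l2 t u * d t u :=
                  Finset.sum_congr rfl fun t _ => Finset.sum_congr rfl fun u _ => hY t u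
  have h1 : ∀ c2 ∈ {c | ∃ l, IsCoupling l ν ρ ∧ c = ∑ s, ∑ t, l s t * d s t},
      W1 d μ ρ - c2 ≤ W1 d μ ν := by
    rintro c2 ⟨l2, hl2, rfl⟩
    refine le_csInf (costSet_nonempty hμ hν) ?_
    rintro c1 ⟨l1, hl1, rfl⟩
    have := core l1 l2 hl1 hl2
    linarith
  have h2 : W1 d μ ρ - W1 d μ ν ≤ W1 d ν ρ := by
    refine le_csInf (costSet_nonempty hν hρ) ?_
    intro c2 hc2
    have := h1 c2 hc2
    linarith
  linarith
end aux

section bis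
variable {S A : Type*} [Fintype S] [Fintype A] [Nonempty S] [Nonempty A]
  (R : S → A → ℝ) (P : S → A → S → ℝ) (hP : ∀ s a, IsProb (P s a))
  {γ : ℝ} (hγ0 : 0 ≤ γ) {d d' : S → S → ℝ} {B : ℝ}

lemma bisimF_le_add (hP : ∀ s a, IsProb (P s a)) (hγ0 : 0 ≤ γ)
    (hB : ∀ s t, d s t ≤ d' s t + B) (hB0 : 0 ≤ B) (s t : S) :
    bisimF R P γ d s t ≤ bisimF R P γ d' s t + γ * B := by
  refine Finset.sup'_le _ _ fun a _ => ?_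
  have h1 : W1 d (P s a) (P t a) ≤ W1 d' (P s a) (P t a) + B :=
    W1_le_W1_add (hP s a) (hP t a) hB
  have h2 : |R s a - R t a| + γ * W1 d' (P s a) (P t a) ≤ bisimF R P γ d' s t :=
    Finset.le_sup' (fun a => |R s a - R t a| + γ * W1 d' (P s a) (P t a)) (mem_univ a)
  nlinarith [mul_le_mul_of_nonneg_left h1 hγ0]

lemma bisimF_dist_le (hP : ∀ s a, IsProb (P s a)) (hγ0 : 0 ≤ γ)
    (hB : ∀ s t, |d s t - d' s t| ≤ B) (s t : S) :
    |bisimF R P γ d s t - bisimF R P γ d' s t| ≤ γ * B := by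
  have hB0 : 0 ≤ B := le_trans (abs_nonneg _) (hB s t)
  rw [abs_sub_le_iff]
  constructor
  · have := bisimF_le_add R P hP hγ0 (d := d) (d' := d')
      (fun s t => by have := (abs_le.1 (hB s t)).2; linarith) hB0 s t
    linarith
  · have := bisimF_le_add R P hP hγ0 (d := d') (d' := d)
      (fun s t => by have := (abs_le.1 (hB s t)).1; linarith) hB0 s t
    linarith

lemma bisimF_pseudo (hP : ∀ s a, IsProb (P s a)) (hγ0 : 0 ≤ γ)
    (hd : IsPseudometric d) : IsPseudometric (bisimF R P γ d) := by
  obtain ⟨hd0, hdiag, hdsymm, hdtri⟩ := hd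
  have hterm0 : ∀ s t (a : A), 0 ≤ |R s a - R t a| + γ * W1 d (P s a) (P t a) :=
    fun s t a => add_nonneg (abs_nonneg _)
      (mul_nonneg hγ0 (W1_nonneg (hP s a) (hP t a) hd0))
  have hnn : ∀ s t, 0 ≤ bisimF R P γ d s t := fun s t =>
    le_trans (hterm0 s t (Classical.arbitrary A))
      (Finset.le_sup' (fun a => |R s a - R t a| + γ * W1 d (P s a) (P t a))
        (mem_univ (Classical.arbitrary A)))
  refine ⟨hnn, fun s => ?_, fun s t => ?_, fun s t u => ?_⟩
  · refine le_antisymm ?_ (hnn s s)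
    refine Finset.sup'_le _ _ fun a _ => ?_
    rw [sub_self, abs_zero, W1_self (hP s a) hdiag hd0, mul_zero, add_zero]
  · refine Finset.sup'_congr _ rfl fun a _ => ?_
    rw [abs_sub_comm, W1_symm hdsymm]
  · refine Finset.sup'_le _ _ fun a _ => ?_
    have h1 : |R s a - R u a| ≤ |R s a - R t a| + |R t a - R u a| := abs_sub_le _ _ _
    have h2 : W1 d (P s a) (P u a) ≤ W1 d (P s a) (P t a) + W1 d (P t a) (P u a) :=
      W1_triangle ⟨hd0, hdiag, hdsymm, hdtri⟩ (hP s a) (hP t a) (hP u a)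
    have h3 : |R s a - R t a| + γ * W1 d (P s a) (P t a) ≤ bisimF R P γ d s t :=
      Finset.le_sup' (fun a => |R s a - R t a| + γ * W1 d (P s a) (P t a)) (mem_univ a)
    have h4 : |R t a - R u a| + γ * W1 d (P t a) (P u a) ≤ bisimF R P γ d t u :=
      Finset.le_sup' (fun a => |R t a - R u a| + γ * W1 d (P t a) (P u a)) (mem_univ a)
    nlinarith [mul_le_mul_of_nonneg_left h2 hγ0]
end bis

theorem bisimF_unique_fixed_point {S A : Type*} [Fintype S] [Fintype A] [Nonempty S] [Nonempty A]
    (R : S → A → ℝ) (P : S → A → S → ℝ) (hP : ∀ s a, IsProb (P s a))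
    (γ : ℝ) (hγ0 : 0 ≤ γ) (hγ1 : γ < 1) :
    ∃! d : S → S → ℝ, IsPseudometric d ∧ bisimF R P γ d = d := by
  set T : (S × S → ℝ) → (S × S → ℝ) :=
    fun f p => bisimF R P γ (fun s t => f (s, t)) p.1 p.2 with hT
  set K : NNReal := ⟨γ, hγ0⟩ with hK
  have hKγ : (K : ℝ) = γ := rfl
  have hcontr : ContractingWith K T := by
    constructor
    · rwa [← NNReal.coe_lt_one, hKγ]
    · refine LipschitzWith.of_dist_le_mul fun f g => ?_
      rw [hKγ]
      rw [dist_pi_le_iff (mul_nonneg hγ0 dist_nonneg)]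
      intro p
      rw [Real.dist_eq]
      exact bisimF_dist_le R P hP hγ0
        (fun s t => by
          have := dist_le_pi_dist f g ((s, t) : S × S)
          rwa [Real.dist_eq] at this) p.1 p.2
  set D : S × S → ℝ := ContractingWith.fixedPoint T hcontr with hD
  have hfix : T D = D := hcontr.fixedPoint_isFixedPt
  -- iterates from 0 are pseudometrics
  have hiter : ∀ n, IsPseudometric (fun s t => (T^[n] (fun _ => 0)) (s, t)) := by
    intro n
    induction n with
    | zero => exact ⟨fun _ _ => le_refl 0, fun _ => rfl, fun _ _ => rfl, fun _ _ _ => by simp⟩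
    | succ n ih =>
      rw [Function.iterate_succ_apply']
      exact bisimF_pseudo R P hP hγ0 ih
  have htend : Filter.Tendsto (fun n => T^[n] (fun _ => 0)) Filter.atTop (nhds D) :=
    hcontr.tendsto_iterate_fixedPoint _
  have hp : ∀ p : S × S, Filter.Tendsto (fun n => (T^[n] (fun _ => 0)) p)
      Filter.atTop (nhds (D p)) := fun p => by
    exact tendsto_pi_nhds.1 htend p
  have hpseudo : IsPseudometric (fun s t => D (s, t)) := by
    refine ⟨fun s t => ?_, fun s => ?_, fun s t => ?_, fun s t u => ?_⟩
    · exact ge_of_tendsto (hp (s, t)) (Filter.Eventually.of_forall fun n => (hiter n).1 s t)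
    · have hz : (fun n => (T^[n] (fun _ => 0)) (s, s)) = fun _ => (0 : ℝ) :=
        funext fun n => (hiter n).2.1 s
      exact tendsto_nhds_unique (hp (s, s)) (hz ▸ tendsto_const_nhds)
    · have hz : (fun n => (T^[n] (fun _ => 0)) (s, t))
          = fun n => (T^[n] (fun _ => 0)) (t, s) :=
        funext fun n => (hiter n).2.2.1 s t
      exact tendsto_nhds_unique (hp (s, t)) (hz ▸ hp (t, s))
    · refine le_of_tendsto_of_tendsto' (hp (s, u)) ((hp (s, t)).add (hp (t, u)))
        fun n => (hiter n).2.2.2 s t u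
  refine ⟨fun s t => D (s, t), ⟨hpseudo, ?_⟩, ?_⟩
  · funext s t
    exact congrFun hfix (s, t)
  · rintro d' ⟨hpd', hfix'⟩
    have hfp : Function.IsFixedPt T (fun p => d' p.1 p.2) := by
      funext p
      show bisimF R P γ (fun s t => d' s t) p.1 p.2 = d' p.1 p.2
      rw [show (fun s t => d' s t) = d' from rfl, hfix']
    have := hcontr.fixedPoint_unique hfp
    funext s t
    exact congrFun this (s, t)
end

section
/- Let d∼ be the unique fixed point of the bisimulation operator F(d)(s,t) = max_a (|R(s,a) − R(t,a)| + γ·W₁(d)(P(s,a), P(t,a))). Then for all states s, t, |V*(s) − V*(t)| ≤ d∼(s,t), where V* is the optimal value function satisfying V*(s) = max_a (R(s,a) + γ·E_{s'∼P(s,a)} V*(s')). -/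
open Finset

theorem optimal_value_bounded_by_bisim {S A : Type*} [Fintype S] [Fintype A] [Nonempty S] [Nonempty A]
    (R : S → A → ℝ) (P : S → A → S → ℝ) (hP : ∀ s a, IsProb (P s a))
    (γ : ℝ) (hγ0 : 0 ≤ γ) (hγ1 : γ < 1)
    (dsim : S → S → ℝ) (hps : IsPseudometric dsim)
    (hfix : bisimF R P γ dsim = dsim)
    (V : S → ℝ)
    (hV : ∀ s, V s = univ.sup' univ_nonempty
      (fun a => R s a + γ * ∑ s', P s a s' * V s')) :
    ∀ s t, |V s - V t| ≤ dsim s t := by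
  set M : ℝ := univ.sup' univ_nonempty
      (fun p : S × S => |V p.1 - V p.2| - dsim p.1 p.2) with hM
  have key : ∀ s t a, (∑ s', P s a s' * V s') - (∑ t', P t a t' * V t')
      ≤ W1 dsim (P s a) (P t a) + M := by
    intro s t a
    have hsum : (∑ s', P s a s' * V s') - (∑ t', P t a t' * V t') - M
        ≤ W1 dsim (P s a) (P t a) := by
      apply le_csInf
      · refine ⟨_, fun s' t' => P s a s' * P t a t',
          ⟨fun s' t' => mul_nonneg ((hP s a).1 s') ((hP t a).1 t'), ?_, ?_⟩, rfl⟩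
        · intro s'
          rw [← Finset.mul_sum, (hP t a).2, mul_one]
        · intro t'
          rw [← Finset.sum_mul, (hP s a).2, one_mul]
      · rintro c ⟨l, ⟨hl0, hl1, hl2⟩, rfl⟩
        have hc : (∑ s', P s a s' * V s') - (∑ t', P t a t' * V t')
            = ∑ s', ∑ t', l s' t' * (V s' - V t') := by
          have e1 : (∑ s', P s a s' * V s') = ∑ s', ∑ t', l s' t' * V s' := by
            refine Finset.sum_congr rfl fun s' _ => ?_
            rw [← Finset.sum_mul, hl1]
          have e2 : (∑ t', P t a t' * V t') = ∑ s', ∑ t', l s' t' * V t' := by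
            rw [Finset.sum_comm]
            refine Finset.sum_congr rfl fun t' _ => ?_
            rw [← Finset.sum_mul, hl2]
          rw [e1, e2, ← Finset.sum_sub_distrib]
          refine Finset.sum_congr rfl fun s' _ => ?_
          rw [← Finset.sum_sub_distrib]
          refine Finset.sum_congr rfl fun t' _ => ?_
          ring
        have hle : ∑ s', ∑ t', l s' t' * (V s' - V t')
            ≤ ∑ s', ∑ t', l s' t' * (dsim s' t' + M) := by
          refine Finset.sum_le_sum fun s' _ => Finset.sum_le_sum fun t' _ => ?_
          refine mul_le_mul_of_nonneg_left ?_ (hl0 s' t')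
          have hM' : |V s' - V t'| - dsim s' t' ≤ M :=
            Finset.le_sup' (fun p : S × S => |V p.1 - V p.2| - dsim p.1 p.2)
              (mem_univ (s', t'))
          have := le_abs_self (V s' - V t')
          linarith
        have hsum1 : ∑ s', ∑ t', l s' t' = 1 := by
          calc ∑ s', ∑ t', l s' t' = ∑ s', P s a s' :=
                Finset.sum_congr rfl fun s' _ => hl1 s'
            _ = 1 := (hP s a).2
        have hsplit : ∑ s', ∑ t', l s' t' * (dsim s' t' + M)
            = (∑ s', ∑ t', l s' t' * dsim s' t') + M := by
          have h2 : ∑ s', ∑ t', l s' t' * M = M := by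
            simp only [← Finset.sum_mul]
            rw [hsum1, one_mul]
          simp only [mul_add, Finset.sum_add_distrib]
          rw [h2]
        linarith [hc ▸ (hsplit ▸ hle)]
    linarith
  have claim : ∀ s t, V s - V t ≤ dsim s t + γ * M := by
    intro s t
    obtain ⟨a, -, ha⟩ := Finset.exists_mem_eq_sup' (s := (univ : Finset A)) univ_nonempty
      (fun a : A => R s a + γ * ∑ s', P s a s' * V s')
    have hVt : R t a + γ * ∑ s', P t a s' * V s' ≤ V t := by
      rw [hV t]
      exact Finset.le_sup' (fun a => R t a + γ * ∑ s', P t a s' * V s') (mem_univ a)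
    have hW : γ * ((∑ s', P s a s' * V s') - (∑ s', P t a s' * V s'))
        ≤ γ * (W1 dsim (P s a) (P t a) + M) :=
      mul_le_mul_of_nonneg_left (key s t a) hγ0
    have hbF : |R s a - R t a| + γ * W1 dsim (P s a) (P t a) ≤ dsim s t := by
      conv_rhs => rw [← hfix]
      show _ ≤ bisimF R P γ dsim s t
      unfold bisimF
      exact Finset.le_sup'
        (fun a => |R s a - R t a| + γ * W1 dsim (P s a) (P t a)) (mem_univ a)
    have hVs : V s = R s a + γ * ∑ s', P s a s' * V s' := by rw [hV s, ← ha]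
    have habs : R s a - R t a ≤ |R s a - R t a| := le_abs_self _
    have hW' : γ * ((∑ s', P s a s' * V s') - (∑ s', P t a s' * V s'))
        ≤ γ * W1 dsim (P s a) (P t a) + γ * M := by
      rw [← mul_add]; exact hW
    have hexp : γ * ((∑ s', P s a s' * V s') - (∑ s', P t a s' * V s'))
        = γ * (∑ s', P s a s' * V s') - γ * (∑ s', P t a s' * V s') := by ring
    linarith [hexp ▸ hW']
  have hMle : M ≤ γ * M := by
    conv_lhs => rw [hM]
    refine Finset.sup'_le _ _ fun p _ => ?_
    have h1 := claim p.1 p.2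
    have h2 := claim p.2 p.1
    rw [hps.2.2.1 p.2 p.1] at h2
    have habs : |V p.1 - V p.2| ≤ dsim p.1 p.2 + γ * M :=
      abs_sub_le_iff.mpr ⟨h1, h2⟩
    linarith
  have hM0 : M ≤ 0 := by nlinarith
  intro s t
  have : |V s - V t| - dsim s t ≤ M :=
    Finset.le_sup' (fun p : S × S => |V p.1 - V p.2| - dsim p.1 p.2) (mem_univ (s, t))
  linarith
end

section
/- The fixed point d^π∼ of the on-policy operator F^π(d)(s,t) = |R^π_s − R^π_t| + γ·W₁(d)(P^π_s, P^π_t) is a pseudometric: it is nonnegative, symmetric, vanishes on the diagonal, and satisfies the triangle inequality. -/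
open Finset

namespace PfAux

variable {S : Type*} [Fintype S]

lemma coupling_total {l : S → S → ℝ} {μ ν : S → ℝ} (hl : IsCoupling l μ ν)
    (hμ : ∑ s, μ s = 1) : ∑ s, ∑ t, l s t = 1 := by
  simp only [hl.2.1]; exact hμ

lemma cost_ge {l : S → S → ℝ} {μ ν : S → ℝ} (hl : IsCoupling l μ ν)
    (hμ : ∑ s, μ s = 1) {d : S → S → ℝ} {b : ℝ} (hb : ∀ s t, b ≤ d s t) :
    b ≤ ∑ s, ∑ t, l s t * d s t := by
  have h1 : ∑ s, ∑ t, l s t * b ≤ ∑ s, ∑ t, l s t * d s t :=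
    Finset.sum_le_sum fun s _ => Finset.sum_le_sum fun t _ =>
      mul_le_mul_of_nonneg_left (hb s t) (hl.1 s t)
  calc b = (∑ s, ∑ t, l s t) * b := by rw [coupling_total hl hμ, one_mul]
    _ = ∑ s, ∑ t, l s t * b := by rw [Finset.sum_mul]; simp [Finset.sum_mul]
    _ ≤ _ := h1

lemma prod_coupling {μ ν : S → ℝ} (hμ : IsProb μ) (hν : IsProb ν) :
    IsCoupling (fun s t => μ s * ν t) μ ν := by
  refine ⟨fun s t => mul_nonneg (hμ.1 s) (hν.1 t), fun s => ?_, fun t => ?_⟩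
  · rw [← Finset.mul_sum, hν.2, mul_one]
  · rw [← Finset.sum_mul, hμ.2, one_mul]

lemma W1set_nonempty {μ ν : S → ℝ} (hμ : IsProb μ) (hν : IsProb ν) (d : S → S → ℝ) :
    Set.Nonempty {c | ∃ l, IsCoupling l μ ν ∧ c = ∑ s, ∑ t, l s t * d s t} :=
  ⟨_, ⟨fun s t => μ s * ν t, prod_coupling hμ hν, rfl⟩⟩

lemma W1set_bddBelow {μ ν : S → ℝ} (hμ : ∑ s, μ s = 1) (d : S → S → ℝ)
    {b : ℝ} (hb : ∀ s t, b ≤ d s t) :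
    BddBelow {c | ∃ l, IsCoupling l μ ν ∧ c = ∑ s, ∑ t, l s t * d s t} :=
  ⟨b, by rintro c ⟨l, hl, rfl⟩; exact cost_ge hl hμ hb⟩

lemma W1_ge {μ ν : S → ℝ} (hμ : IsProb μ) (hν : IsProb ν) {d : S → S → ℝ}
    {b : ℝ} (hb : ∀ s t, b ≤ d s t) : b ≤ W1 d μ ν :=
  le_csInf (W1set_nonempty hμ hν d) (by rintro c ⟨l, hl, rfl⟩; exact cost_ge hl hμ.2 hb)

lemma W1_le {μ ν : S → ℝ} (hμ : ∑ s, μ s = 1) {d : S → S → ℝ} {b : ℝ}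
    (hb : ∀ s t, b ≤ d s t) {l : S → S → ℝ} (hl : IsCoupling l μ ν) :
    W1 d μ ν ≤ ∑ s, ∑ t, l s t * d s t :=
  csInf_le (W1set_bddBelow hμ d hb) ⟨l, hl, rfl⟩

lemma transpose_coupling {l : S → S → ℝ} {μ ν : S → ℝ} (hl : IsCoupling l μ ν) :
    IsCoupling (fun t s => l s t) ν μ := ⟨fun t s => hl.1 s t, hl.2.2, hl.2.1⟩

lemma W1_swap_le {μ ν : S → ℝ} (hμ : IsProb μ) (hν : IsProb ν) {d : S → S → ℝ}
    {b Δ : ℝ} (hb : ∀ s t, b ≤ d s t) (hΔ : ∀ a c, d c a ≤ d a c + Δ) :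
    W1 d ν μ ≤ W1 d μ ν + Δ := by
  have key : W1 d ν μ - Δ ≤ W1 d μ ν := by
    apply le_csInf (W1set_nonempty hμ hν d)
    rintro c ⟨l, hl, rfl⟩
    have h1 : W1 d ν μ ≤ ∑ t, ∑ s, l s t * d t s := W1_le hν.2 hb (transpose_coupling hl)
    have h2 : ∑ t, ∑ s, l s t * d t s ≤ (∑ s, ∑ t, l s t * d s t) + Δ := by
      rw [Finset.sum_comm]
      have h3 : ∀ s t : S, l s t * d t s ≤ l s t * d s t + l s t * Δ := by
        intro s t
        have := mul_le_mul_of_nonneg_left (hΔ s t) (hl.1 s t)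
        linarith [this, (mul_add (l s t) (d s t) Δ).symm]
      calc ∑ s, ∑ t, l s t * d t s ≤ ∑ s, ∑ t, (l s t * d s t + l s t * Δ) :=
            Finset.sum_le_sum fun s _ => Finset.sum_le_sum fun t _ => h3 s t
        _ = (∑ s, ∑ t, l s t * d s t) + (∑ s, ∑ t, l s t) * Δ := by
            simp [Finset.sum_add_distrib, Finset.sum_mul]
        _ = (∑ s, ∑ t, l s t * d s t) + Δ := by
            simp only [hl.2.1, hμ.2, one_mul]
    linarith
  linarith

lemma diag_coupling [DecidableEq S] {μ : S → ℝ} (hμ : IsProb μ) :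
    IsCoupling (fun s t => if s = t then μ s else 0) μ μ := by
  refine ⟨fun s t => ?_, fun s => ?_, fun t => ?_⟩
  · dsimp only; split
    · exact hμ.1 s
    · exact le_rfl
  · simp
  · simp only
    rw [Finset.sum_ite_eq' univ t (fun x => μ x)]
    simp

lemma glue_marg_u {l1 l2 : S → S → ℝ} {μ ν ρ : S → ℝ}
    (h1 : IsCoupling l1 μ ν) (h2 : IsCoupling l2 ν ρ) (s t : S) :
    (∑ u, if ν t = 0 then 0 else l1 s t * l2 t u / ν t) = l1 s t := by
  by_cases ht : ν t = 0
  · have : l1 s t = 0 := by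
      have hsum : ∑ x, l1 x t = 0 := (h1.2.2 t).trans ht
      exact (Finset.sum_eq_zero_iff_of_nonneg (fun x _ => h1.1 x t)).mp hsum s (mem_univ s)
    simp [ht, this]
  · simp only [ht, if_false]
    rw [← Finset.sum_div, ← Finset.mul_sum, h2.2.1 t, mul_div_assoc, div_self ht, mul_one]

lemma glue_marg_s {l1 l2 : S → S → ℝ} {μ ν ρ : S → ℝ}
    (h1 : IsCoupling l1 μ ν) (h2 : IsCoupling l2 ν ρ) (t u : S) :
    (∑ s, if ν t = 0 then 0 else l1 s t * l2 t u / ν t) = l2 t u := by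
  by_cases ht : ν t = 0
  · have : l2 t u = 0 := by
      have hsum : ∑ x, l2 t x = 0 := (h2.2.1 t).trans ht
      exact (Finset.sum_eq_zero_iff_of_nonneg (fun x _ => h2.1 t x)).mp hsum u (mem_univ u)
    simp [ht, this]
  · simp only [ht, if_false]
    have : ∀ s : S, l1 s t * l2 t u / ν t = l1 s t * (l2 t u / ν t) := fun s => by ring
    simp only [this]
    rw [← Finset.sum_mul, h1.2.2 t, mul_div_assoc']
    field_simp

lemma glue_coupling {l1 l2 : S → S → ℝ} {μ ν ρ : S → ℝ}
    (h1 : IsCoupling l1 μ ν) (h2 : IsCoupling l2 ν ρ) :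
    IsCoupling (fun s u => ∑ t, if ν t = 0 then 0 else l1 s t * l2 t u / ν t) μ ρ := by
  have hνnn : ∀ t, (0:ℝ) ≤ ν t := fun t => by
    rw [← h1.2.2 t]; exact Finset.sum_nonneg fun x _ => h1.1 x t
  refine ⟨fun s u => Finset.sum_nonneg fun t _ => ?_, fun s => ?_, fun u => ?_⟩
  · split
    · exact le_rfl
    · exact div_nonneg (mul_nonneg (h1.1 s t) (h2.1 t u)) (hνnn t)
  · simp only
    rw [Finset.sum_comm]
    simp only [glue_marg_u h1 h2 s]
    exact h1.2.1 s
  · simp only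
    rw [Finset.sum_comm]
    simp only [glue_marg_s h1 h2]
    exact h2.2.2 u

lemma glue_cost_le {l1 l2 : S → S → ℝ} {μ ν ρ : S → ℝ}
    (h1 : IsCoupling l1 μ ν) (h2 : IsCoupling l2 ν ρ) (hμ : ∑ s, μ s = 1)
    {d : S → S → ℝ} {K : ℝ} (hK : ∀ s t u, d s u ≤ d s t + d t u + K) :
    ∑ s, ∑ u, (∑ t, if ν t = 0 then 0 else l1 s t * l2 t u / ν t) * d s u
      ≤ (∑ s, ∑ t, l1 s t * d s t) + (∑ t, ∑ u, l2 t u * d t u) + K := by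
  set w : S → S → S → ℝ := fun s t u => if ν t = 0 then 0 else l1 s t * l2 t u / ν t with hw
  have hνnn : ∀ t, (0:ℝ) ≤ ν t := fun t => by
    rw [← h1.2.2 t]; exact Finset.sum_nonneg fun x _ => h1.1 x t
  have hwnn : ∀ s t u, 0 ≤ w s t u := by
    intro s t u; rw [hw]; dsimp only; split
    · exact le_rfl
    · exact div_nonneg (mul_nonneg (h1.1 s t) (h2.1 t u)) (hνnn t)
  have step1 : ∑ s, ∑ u, (∑ t, w s t u) * d s u
      ≤ ∑ s, ∑ u, ∑ t, (w s t u * d s t + w s t u * d t u + w s t u * K) := by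
    refine Finset.sum_le_sum fun s _ => Finset.sum_le_sum fun u _ => ?_
    rw [Finset.sum_mul]
    refine Finset.sum_le_sum fun t _ => ?_
    have := mul_le_mul_of_nonneg_left (hK s t u) (hwnn s t u)
    nlinarith [this]
  have splitsum : ∑ s, ∑ u, ∑ t, (w s t u * d s t + w s t u * d t u + w s t u * K)
      = (∑ s, ∑ u, ∑ t, w s t u * d s t) + (∑ s, ∑ u, ∑ t, w s t u * d t u)
        + (∑ s, ∑ u, ∑ t, w s t u * K) := by
    simp [Finset.sum_add_distrib]
  have hA : (∑ s, ∑ u, ∑ t, w s t u * d s t) = ∑ s, ∑ t, l1 s t * d s t := by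
    refine Finset.sum_congr rfl fun s _ => ?_
    rw [Finset.sum_comm]
    refine Finset.sum_congr rfl fun t _ => ?_
    rw [← Finset.sum_mul, glue_marg_u h1 h2 s t]
  have hB : (∑ s, ∑ u, ∑ t, w s t u * d t u) = ∑ t, ∑ u, l2 t u * d t u := by
    rw [Finset.sum_comm]
    rw [show (∑ u, ∑ s, ∑ t, w s t u * d t u) = ∑ u, ∑ t, ∑ s, w s t u * d t u from
      Finset.sum_congr rfl fun u _ => Finset.sum_comm]
    rw [Finset.sum_comm]
    refine Finset.sum_congr rfl fun t _ => Finset.sum_congr rfl fun u _ => ?_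
    rw [← Finset.sum_mul, glue_marg_s h1 h2 t u]
  have hC : (∑ s, ∑ u, ∑ t, w s t u * K) = K := by
    have : ∀ s, (∑ u, ∑ t, w s t u * K) = μ s * K := by
      intro s
      rw [Finset.sum_comm]
      have : ∀ t, (∑ u, w s t u * K) = l1 s t * K := fun t => by
        rw [← Finset.sum_mul, glue_marg_u h1 h2 s t]
      simp only [this]
      rw [← Finset.sum_mul, h1.2.1 s]
    simp only [this]
    rw [← Finset.sum_mul, hμ, one_mul]
  calc ∑ s, ∑ u, (∑ t, w s t u) * d s u ≤ _ := step1
    _ = _ := splitsum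
    _ = (∑ s, ∑ t, l1 s t * d s t) + (∑ t, ∑ u, l2 t u * d t u) + K := by
        rw [hA, hB, hC]

lemma W1_triangle {μ ν ρ : S → ℝ} (hμ : IsProb μ) (hν : IsProb ν) (hρ : IsProb ρ)
    {d : S → S → ℝ} {b K : ℝ} (hb : ∀ s t, b ≤ d s t)
    (hK : ∀ s t u, d s u ≤ d s t + d t u + K) :
    W1 d μ ρ ≤ W1 d μ ν + W1 d ν ρ + K := by
  have h1 : W1 d μ ρ - K - W1 d ν ρ ≤ W1 d μ ν := by
    apply le_csInf (W1set_nonempty hμ hν d)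
    rintro c1 ⟨l1, hl1, rfl⟩
    have h2 : W1 d μ ρ - K - (∑ s, ∑ t, l1 s t * d s t) ≤ W1 d ν ρ := by
      apply le_csInf (W1set_nonempty hν hρ d)
      rintro c2 ⟨l2, hl2, rfl⟩
      have hle : W1 d μ ρ ≤ ∑ s, ∑ u,
          (∑ t, if ν t = 0 then 0 else l1 s t * l2 t u / ν t) * d s u :=
        W1_le hμ.2 hb (glue_coupling hl1 hl2)
      have := glue_cost_le hl1 hl2 hμ.2 hK
      linarith
    linarith
  linarith

lemma Ppi_isProb {S A : Type*} [Fintype S] [Fintype A] (P : S → A → S → ℝ)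
    (pol : S → A → ℝ) (hP : ∀ s a, IsProb (P s a)) (hpol : ∀ s, IsProb (pol s))
    (s : S) : IsProb (Ppi P pol s) := by
  constructor
  · intro s'
    exact Finset.sum_nonneg fun a _ => mul_nonneg ((hpol s).1 a) ((hP s a).1 s')
  · unfold Ppi
    rw [Finset.sum_comm]
    have h : ∀ a, ∑ s', pol s a * P s a s' = pol s a := fun a => by
      rw [← Finset.mul_sum, (hP s a).2, mul_one]
    simp only [h, (hpol s).2]

end PfAux

theorem piF_fixed_point_is_pseudometric {S A : Type*} [Fintype S] [Fintype A] [Nonempty S] [Nonempty A]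
    (R : S → A → ℝ) (P : S → A → S → ℝ) (hP : ∀ s a, IsProb (P s a))
    (pol : S → A → ℝ) (hpol : ∀ s, IsProb (pol s))
    (γ : ℝ) (hγ0 : 0 ≤ γ) (hγ1 : γ < 1)
    (d : S → S → ℝ) (hfix : piF R P pol γ d = d) :
    IsPseudometric d := by
  classical
  have hfix' : ∀ s t, d s t
      = |Rpi R pol s - Rpi R pol t| + γ * W1 d (Ppi P pol s) (Ppi P pol t) :=
    fun s t => (congrFun (congrFun hfix s) t).symm
  have hprob : ∀ s, IsProb (Ppi P pol s) := PfAux.Ppi_isProb P pol hP hpol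
  -- nonnegativity
  obtain ⟨p0, -, hp0⟩ := Finset.exists_mem_eq_inf'
    (univ_nonempty : (univ : Finset (S × S)).Nonempty) (fun p : S × S => d p.1 p.2)
  set m := (univ : Finset (S × S)).inf' univ_nonempty (fun p : S × S => d p.1 p.2) with hmdef
  have hm : ∀ s t, m ≤ d s t := fun s t => Finset.inf'_le _ (Finset.mem_univ (s, t))
  have hm0 : 0 ≤ m := by
    have h1 : γ * m ≤ d p0.1 p0.2 := by
      rw [hfix' p0.1 p0.2]
      have hw : m ≤ W1 d (Ppi P pol p0.1) (Ppi P pol p0.2) :=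
        PfAux.W1_ge (hprob p0.1) (hprob p0.2) hm
      have := mul_le_mul_of_nonneg_left hw hγ0
      have habs := abs_nonneg (Rpi R pol p0.1 - Rpi R pol p0.2)
      linarith
    rw [← hp0] at h1
    nlinarith
  have hd0 : ∀ s t, (0:ℝ) ≤ d s t := fun s t => le_trans hm0 (hm s t)
  -- diagonal
  have hdiag : ∀ s, d s s = 0 := by
    obtain ⟨s1, -, hs1⟩ := Finset.exists_mem_eq_sup'
      (univ_nonempty : (univ : Finset S).Nonempty) (fun s : S => d s s)
    set M := (univ : Finset S).sup' univ_nonempty (fun s : S => d s s) with hMdef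
    have hMle : ∀ s, d s s ≤ M := fun s =>
      Finset.le_sup' (f := fun x : S => d x x) (Finset.mem_univ s)
    have key : ∀ s, d s s ≤ γ * M := by
      intro s
      rw [hfix' s s]
      simp only [sub_self, abs_zero, zero_add]
      have hc : W1 d (Ppi P pol s) (Ppi P pol s)
          ≤ ∑ a, ∑ b, (if a = b then Ppi P pol s a else 0) * d a b :=
        PfAux.W1_le (hprob s).2 hd0 (PfAux.diag_coupling (hprob s))
      have hc2 : (∑ a, ∑ b, (if a = b then Ppi P pol s a else 0) * d a b)
          = ∑ a, Ppi P pol s a * d a a := by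
        refine Finset.sum_congr rfl fun a _ => ?_
        rw [Finset.sum_eq_single a]
        · simp
        · intro b _ hb
          rw [if_neg (fun h => hb h.symm), zero_mul]
        · intro h; exact absurd (Finset.mem_univ a) h
      have hc3 : ∑ a, Ppi P pol s a * d a a ≤ M := by
        calc ∑ a, Ppi P pol s a * d a a ≤ ∑ a, Ppi P pol s a * M :=
              Finset.sum_le_sum fun a _ =>
                mul_le_mul_of_nonneg_left (hMle a) ((hprob s).1 a)
          _ = M := by rw [← Finset.sum_mul, (hprob s).2, one_mul]
      have := mul_le_mul_of_nonneg_left (le_trans (hc.trans_eq hc2) hc3) hγ0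
      linarith
    have hM0 : M ≤ 0 := by
      have := key s1
      rw [← hs1] at this
      nlinarith
    intro s
    have h1 : d s s ≤ γ * M := key s
    have h2 : γ * M ≤ 0 := mul_nonpos_of_nonneg_of_nonpos hγ0 hM0
    exact le_antisymm (h1.trans h2) (hd0 s s)
  -- symmetry
  have hsymm : ∀ s t, d s t = d t s := by
    obtain ⟨p2, -, hp2⟩ := Finset.exists_mem_eq_sup'
      (univ_nonempty : (univ : Finset (S × S)).Nonempty)
      (fun p : S × S => d p.1 p.2 - d p.2 p.1)
    set Δ := (univ : Finset (S × S)).sup' univ_nonempty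
      (fun p : S × S => d p.1 p.2 - d p.2 p.1) with hΔdef
    have hΔle : ∀ a c, d c a ≤ d a c + Δ := by
      intro a c
      have := Finset.le_sup' (f := fun p : S × S => d p.1 p.2 - d p.2 p.1)
        (Finset.mem_univ (c, a))
      simp only at this
      linarith
    have hΔ0 : 0 ≤ Δ := by
      obtain s := Classical.arbitrary S
      have h := Finset.le_sup' (f := fun p : S × S => d p.1 p.2 - d p.2 p.1)
        (Finset.mem_univ (s, s))
      simp only at h
      linarith
    have hkey : Δ ≤ γ * Δ := by
      have hw := PfAux.W1_swap_le (hprob p2.2) (hprob p2.1) hd0 hΔle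
      have hγw := mul_le_mul_of_nonneg_left hw hγ0
      have habs : |Rpi R pol p2.1 - Rpi R pol p2.2|
          = |Rpi R pol p2.2 - Rpi R pol p2.1| := abs_sub_comm _ _
      have e1 := hfix' p2.1 p2.2
      have e2 := hfix' p2.2 p2.1
      have hΔeq : Δ = d p2.1 p2.2 - d p2.2 p2.1 := hp2
      nlinarith [hγw, e1, e2, habs, hΔeq]
    have hΔzero : Δ = 0 := le_antisymm (by nlinarith) hΔ0
    intro s t
    have h1 : d s t - d t s ≤ Δ :=
      Finset.le_sup' (f := fun p : S × S => d p.1 p.2 - d p.2 p.1) (Finset.mem_univ (s, t))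
    have h2 : d t s - d s t ≤ Δ :=
      Finset.le_sup' (f := fun p : S × S => d p.1 p.2 - d p.2 p.1) (Finset.mem_univ (t, s))
    rw [hΔzero] at h1 h2
    linarith
  -- triangle
  have htri : ∀ s t u, d s u ≤ d s t + d t u := by
    obtain ⟨q, -, hq⟩ := Finset.exists_mem_eq_sup'
      (univ_nonempty : (univ : Finset (S × S × S)).Nonempty)
      (fun q : S × S × S => d q.1 q.2.2 - d q.1 q.2.1 - d q.2.1 q.2.2)
    set K := (univ : Finset (S × S × S)).sup' univ_nonempty
      (fun q : S × S × S => d q.1 q.2.2 - d q.1 q.2.1 - d q.2.1 q.2.2) with hKdef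
    have hKle : ∀ s t u, d s u ≤ d s t + d t u + K := by
      intro s t u
      have := Finset.le_sup'
        (f := fun q : S × S × S => d q.1 q.2.2 - d q.1 q.2.1 - d q.2.1 q.2.2)
        (Finset.mem_univ (s, t, u))
      simp only at this
      linarith
    have hkey : K ≤ γ * K := by
      obtain ⟨s, t, u⟩ := q
      have hw := PfAux.W1_triangle (hprob s) (hprob t) (hprob u) hd0 hKle
      have hγw := mul_le_mul_of_nonneg_left hw hγ0
      have habs : |Rpi R pol s - Rpi R pol u|
          ≤ |Rpi R pol s - Rpi R pol t| + |Rpi R pol t - Rpi R pol u| := abs_sub_le _ _ _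
      have e1 := hfix' s u
      have e2 := hfix' s t
      have e3 := hfix' t u
      have hKeq : K = d s u - d s t - d t u := hq
      nlinarith [hγw, e1, e2, e3, habs, hKeq]
    have hK0 : K ≤ 0 := by nlinarith
    intro s t u
    have := hKle s t u
    linarith
  exact ⟨hd0, hdiag, hsymm, htri⟩
end

section
/- For any two states s, t in a finite MDP and any stationary policy π, |V^π(s) − V^π(t)| ≤ d^π∼(s,t), where V^π is the value function of π and d^π∼ is the fixed point of the π-bisimulation operator F^π. -/
open Finset

theorem value_diff_le_pi_bisim {S A : Type*} [Fintype S] [Fintype A] [Nonempty S] [Nonempty A]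
    (R : S → A → ℝ) (P : S → A → S → ℝ) (hP : ∀ s a, IsProb (P s a))
    (pol : S → A → ℝ) (hpol : ∀ s, IsProb (pol s))
    (γ : ℝ) (hγ0 : 0 ≤ γ) (hγ1 : γ < 1)
    (dsim : S → S → ℝ) (hps : IsPseudometric dsim)
    (hfix : piF R P pol γ dsim = dsim)
    (V : S → ℝ)
    (hV : ∀ s, V s = Rpi R pol s + γ * ∑ s', Ppi P pol s s' * V s') :
    ∀ s t, |V s - V t| ≤ dsim s t := by
  classical
  have hPp1 : ∀ s, ∑ s', Ppi P pol s s' = 1 := by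
    intro s
    unfold Ppi
    rw [Finset.sum_comm]
    have h : ∀ a, ∑ s', pol s a * P s a s' = pol s a := by
      intro a
      rw [← Finset.mul_sum, (hP s a).2, mul_one]
    calc ∑ a, ∑ s', pol s a * P s a s' = ∑ a, pol s a := Finset.sum_congr rfl fun a _ => h a
      _ = 1 := (hpol s).2
  have hPp0 : ∀ s s', 0 ≤ Ppi P pol s s' := fun s s' =>
    Finset.sum_nonneg fun a _ => mul_nonneg ((hpol s).1 a) ((hP s a).1 s')
  set M := (univ : Finset (S × S)).sup' univ_nonempty
      (fun p => |V p.1 - V p.2| - dsim p.1 p.2) with hMdef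
  have hpair : ∀ u v : S, |V u - V v| - dsim u v ≤ M := fun u v =>
    le_sup' (fun p : S × S => |V p.1 - V p.2| - dsim p.1 p.2) (mem_univ (u, v))
  have key : ∀ u v : S, |V u - V v| ≤ dsim u v + γ * M := by
    intro u v
    have hDle : ∀ l, IsCoupling l (Ppi P pol u) (Ppi P pol v) →
        |(∑ s', Ppi P pol u s' * V s') - ∑ s', Ppi P pol v s' * V s'|
          ≤ (∑ x, ∑ y, l x y * dsim x y) + M := by
      rintro l ⟨hl0, hl1, hl2⟩
      have hexp : (∑ s', Ppi P pol u s' * V s') - ∑ s', Ppi P pol v s' * V s'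
          = ∑ x, ∑ y, l x y * (V x - V y) := by
        have h1 : ∑ x, ∑ y, l x y * V x = ∑ s', Ppi P pol u s' * V s' := by
          refine Finset.sum_congr rfl fun x _ => ?_
          rw [← Finset.sum_mul, hl1]
        have h2 : ∑ x, ∑ y, l x y * V y = ∑ s', Ppi P pol v s' * V s' := by
          rw [Finset.sum_comm]
          refine Finset.sum_congr rfl fun y _ => ?_
          rw [← Finset.sum_mul, hl2]
        simp_rw [mul_sub, Finset.sum_sub_distrib]
        rw [h1, h2]
      rw [hexp]
      have hsum1 : ∑ x, ∑ y, l x y = 1 := by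
        calc ∑ x, ∑ y, l x y = ∑ x, Ppi P pol u x := Finset.sum_congr rfl fun x _ => hl1 x
          _ = 1 := hPp1 u
      calc |∑ x, ∑ y, l x y * (V x - V y)|
          ≤ ∑ x, ∑ y, |l x y * (V x - V y)| := by
            refine (Finset.abs_sum_le_sum_abs _ _).trans ?_
            exact Finset.sum_le_sum fun x _ => Finset.abs_sum_le_sum_abs _ _
        _ = ∑ x, ∑ y, l x y * |V x - V y| := by
            refine Finset.sum_congr rfl fun x _ => Finset.sum_congr rfl fun y _ => ?_
            rw [abs_mul, abs_of_nonneg (hl0 x y)]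
        _ ≤ ∑ x, ∑ y, l x y * (dsim x y + M) := by
            refine Finset.sum_le_sum fun x _ => Finset.sum_le_sum fun y _ => ?_
            exact mul_le_mul_of_nonneg_left (by linarith [hpair x y]) (hl0 x y)
        _ = (∑ x, ∑ y, l x y * dsim x y) + M := by
            simp_rw [mul_add, Finset.sum_add_distrib]
            have : (∑ x, ∑ y, l x y * M) = M := by
              simp_rw [← Finset.sum_mul]
              rw [hsum1, one_mul]
            rw [this]
    have hne : Set.Nonempty {c | ∃ l, IsCoupling l (Ppi P pol u) (Ppi P pol v) ∧
        c = ∑ x, ∑ y, l x y * dsim x y} := by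
      refine ⟨_, ⟨fun x y => Ppi P pol u x * Ppi P pol v y, ⟨?_, ?_, ?_⟩, rfl⟩⟩
      · intro x y; exact mul_nonneg (hPp0 u x) (hPp0 v y)
      · intro x; rw [← Finset.mul_sum, hPp1 v, mul_one]
      · intro y; rw [← Finset.sum_mul, hPp1 u, one_mul]
    have hW : |(∑ s', Ppi P pol u s' * V s') - ∑ s', Ppi P pol v s' * V s'| - M
        ≤ W1 dsim (Ppi P pol u) (Ppi P pol v) := by
      refine le_csInf hne ?_
      rintro c ⟨l, hl, rfl⟩
      linarith [hDle l hl]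
    have hdsim : |Rpi R pol u - Rpi R pol v|
        + γ * W1 dsim (Ppi P pol u) (Ppi P pol v) = dsim u v :=
      congrFun (congrFun hfix u) v
    have hVdiff : V u - V v = (Rpi R pol u - Rpi R pol v)
        + γ * ((∑ s', Ppi P pol u s' * V s') - ∑ s', Ppi P pol v s' * V s') := by
      rw [hV u, hV v]; ring
    calc |V u - V v| ≤ |Rpi R pol u - Rpi R pol v|
        + γ * |(∑ s', Ppi P pol u s' * V s') - ∑ s', Ppi P pol v s' * V s'| := by
          rw [hVdiff]
          refine (abs_add_le _ _).trans ?_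
          rw [abs_mul, abs_of_nonneg hγ0]
      _ ≤ |Rpi R pol u - Rpi R pol v|
          + γ * (W1 dsim (Ppi P pol u) (Ppi P pol v) + M) := by
          nlinarith [hW, hγ0]
      _ = dsim u v + γ * M := by rw [← hdsim]; ring
  have hMγ : M ≤ γ * M := by
    refine Finset.sup'_le _ _ fun p _ => ?_
    linarith [key p.1 p.2]
  have hM0 : M ≤ 0 := by nlinarith
  intro s t
  linarith [hpair s t]
end

section
/- Let V^π_0 ≡ 0, V^π_{n+1}(s) = R^π_s + γ Σ_{s'} P^π_s(s') V^π_n(s'), and d^π_0 ≡ 0, d^π_{n+1} = F^π(d^π_n). Then for all n and all states s, t: |V^π_n(s) − V^π_n(t)| ≤ d^π_n(s,t). -/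
open Finset

lemma w1_bound {S : Type*} [Fintype S] (d : S → S → ℝ) (μ ν : S → ℝ)
    (hμ : IsProb μ) (hν : IsProb ν) (f : S → ℝ) (hf : ∀ s t, |f s - f t| ≤ d s t) :
    |∑ s, μ s * f s - ∑ t, ν t * f t| ≤ W1 d μ ν := by
  apply le_csInf
  · refine ⟨∑ s, ∑ t, (μ s * ν t) * d s t, fun s t => μ s * ν t, ⟨?_, ?_, ?_⟩, rfl⟩
    · intro s t; exact mul_nonneg (hμ.1 s) (hν.1 t)
    · intro s; rw [← Finset.mul_sum, hν.2, mul_one]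
    · intro t; rw [← Finset.sum_mul, hμ.2, one_mul]
  · rintro c ⟨l, ⟨hl0, hl1, hl2⟩, rfl⟩
    have hA : ∑ s, μ s * f s = ∑ s, ∑ t, l s t * f s := by
      refine Finset.sum_congr rfl fun s _ => ?_
      rw [← hl1 s, Finset.sum_mul]
    have hB : ∑ t, ν t * f t = ∑ s, ∑ t, l s t * f t := by
      rw [Finset.sum_comm]
      refine Finset.sum_congr rfl fun t _ => ?_
      rw [← hl2 t, Finset.sum_mul]
    rw [hA, hB, ← Finset.sum_sub_distrib]
    calc |∑ s, (∑ t, l s t * f s - ∑ t, l s t * f t)|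
        ≤ ∑ s, |∑ t, l s t * f s - ∑ t, l s t * f t| := Finset.abs_sum_le_sum_abs _ _
      _ ≤ ∑ s, ∑ t, l s t * d s t := by
          refine Finset.sum_le_sum fun s _ => ?_
          rw [← Finset.sum_sub_distrib]
          calc |∑ t, (l s t * f s - l s t * f t)|
              ≤ ∑ t, |l s t * f s - l s t * f t| := Finset.abs_sum_le_sum_abs _ _
            _ ≤ ∑ t, l s t * d s t := by
                refine Finset.sum_le_sum fun t _ => ?_
                rw [← mul_sub, abs_mul, abs_of_nonneg (hl0 s t)]
                exact mul_le_mul_of_nonneg_left (hf s t) (hl0 s t)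

lemma Ppi_isProb {S A : Type*} [Fintype S] [Fintype A] (P : S → A → S → ℝ)
    (hP : ∀ s a, IsProb (P s a)) (pol : S → A → ℝ) (hpol : ∀ s, IsProb (pol s))
    (s : S) : IsProb (Ppi P pol s) := by
  constructor
  · intro s'
    exact Finset.sum_nonneg fun a _ => mul_nonneg ((hpol s).1 a) ((hP s a).1 s')
  · unfold Ppi
    rw [Finset.sum_comm]
    calc ∑ a, ∑ s', pol s a * P s a s'
        = ∑ a : A, pol s a := by
          refine Finset.sum_congr rfl fun a _ => ?_
          rw [← Finset.mul_sum, (hP s a).2, mul_one]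
      _ = 1 := (hpol s).2

theorem value_iterates_le_metric_iterates {S A : Type*} [Fintype S] [Fintype A] [Nonempty S] [Nonempty A]
    (R : S → A → ℝ) (P : S → A → S → ℝ) (hP : ∀ s a, IsProb (P s a))
    (pol : S → A → ℝ) (hpol : ∀ s, IsProb (pol s))
    (γ : ℝ) (hγ0 : 0 ≤ γ) (hγ1 : γ < 1)
    (V : ℕ → S → ℝ) (hV0 : ∀ s, V 0 s = 0)
    (hV : ∀ n s, V (n + 1) s = Rpi R pol s + γ * ∑ s', Ppi P pol s s' * V n s')
    (d : ℕ → S → S → ℝ) (hd0 : ∀ s t, d 0 s t = 0)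
    (hd : ∀ n, d (n + 1) = piF R P pol γ (d n)) :
    ∀ n s t, |V n s - V n t| ≤ d n s t := by
  intro n
  induction n with
  | zero => intro s t; simp [hV0, hd0]
  | succ n ih =>
    intro s t
    rw [hV n s, hV n t, hd n]
    unfold piF
    have h1 : |(∑ s', Ppi P pol s s' * V n s') - ∑ s', Ppi P pol t s' * V n s'|
        ≤ W1 (d n) (Ppi P pol s) (Ppi P pol t) := by
      apply w1_bound _ _ _ (Ppi_isProb P hP pol hpol s) (Ppi_isProb P hP pol hpol t)
      exact ih
    calc |Rpi R pol s + γ * ∑ s', Ppi P pol s s' * V n s' -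
          (Rpi R pol t + γ * ∑ s', Ppi P pol t s' * V n s')|
        = |(Rpi R pol s - Rpi R pol t) +
            γ * ((∑ s', Ppi P pol s s' * V n s') - ∑ s', Ppi P pol t s' * V n s')| := by
          ring_nf
      _ ≤ |Rpi R pol s - Rpi R pol t| +
            |γ * ((∑ s', Ppi P pol s s' * V n s') - ∑ s', Ppi P pol t s' * V n s')| :=
          abs_add_le _ _
      _ ≤ |Rpi R pol s - Rpi R pol t| + γ * W1 (d n) (Ppi P pol s) (Ppi P pol t) := by
          gcongr
          rw [abs_mul, abs_of_nonneg hγ0]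
          exact mul_le_mul_of_nonneg_left h1 hγ0
end

section
/- If E is a bisimulation relation on a finite MDP (i.e., whenever (s,t) ∈ E: for all a, R(s,a) = R(t,a) and P(s,a)(C) = P(t,a)(C) for every E-equivalence class C), then for any two E-related states s and t, V*(s) = V*(t). -/
open Finset

/-!
Let `D` be the largest gap `V s - V t` over `E`-related pairs. Related states have the same
rewards, and their transition laws give the same mass to every `E`-class, on which `V` varies by
at most `D`; so the Bellman equation bounds the gap between related states by `γ D`. Hence
`D ≤ γ D`, and `D = 0` because `γ < 1`.
-/

section FibreSums

variable {S ι : Type*} [Fintype S]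

theorem sum_mul_comp_eq_of_fibre_sums_eq [Fintype ι] [DecidableEq ι] (π : S → ι) {μ ν : S → ℝ}
    (hμν : ∀ i, ∑ x with π x = i, μ x = ∑ x with π x = i, ν x) (g : ι → ℝ) :
    ∑ x, μ x * g (π x) = ∑ x, ν x * g (π x) := by
  have hfibre (μ : S → ℝ) : ∑ x, μ x * g (π x) = ∑ i, (∑ x with π x = i, μ x) * g i := by
    rw [← sum_fiberwise univ π]
    refine sum_congr rfl fun i _ => ?_
    rw [sum_mul]
    exact sum_congr rfl fun x hx => by rw [(mem_filter.1 hx).2]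
  simp only [hfibre, hμν]

variable [r : Setoid S] [DecidableRel ((· ≈ ·) : S → S → Prop)]

/-- Compare both sums with the class-wise maximum of `f`, which integrates equally against `μ`
and `ν`. -/
theorem sum_mul_sub_sum_mul_le_of_class_masses_eq {μ ν f : S → ℝ} {D : ℝ}
    (hμ : ∀ x, 0 ≤ μ x) (hν : ∀ x, 0 ≤ ν x)
    (hμν : ∀ q : Quotient r, ∑ x with ⟦x⟧ = q, μ x = ∑ x with ⟦x⟧ = q, ν x)
    (hf : ∀ x y, x ≈ y → f x ≤ f y + D) :
    ∑ x, μ x * f x - ∑ x, ν x * f x ≤ D * ∑ x, ν x := by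
  let classMax (q : Quotient r) : ℝ :=
    (univ.filter fun x => ⟦x⟧ = q).sup' ⟨q.out, by simp⟩ f
  have le_classMax (x : S) : f x ≤ classMax ⟦x⟧ := le_sup' f (by simp)
  have classMax_le (x : S) : classMax ⟦x⟧ ≤ f x + D :=
    sup'_le _ _ fun y hy => hf y x (Quotient.exact (mem_filter.1 hy).2)
  calc ∑ x, μ x * f x - ∑ x, ν x * f x
      ≤ ∑ x, μ x * classMax ⟦x⟧ - ∑ x, ν x * f x := by
        gcongr with x
        · exact hμ x
        · exact le_classMax x
    _ = ∑ x, ν x * classMax ⟦x⟧ - ∑ x, ν x * f x := by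
        rw [sum_mul_comp_eq_of_fibre_sums_eq _ hμν]
    _ ≤ ∑ x, ν x * (f x + D) - ∑ x, ν x * f x := by
        gcongr with x
        · exact hν x
        · exact classMax_le x
    _ = D * ∑ x, ν x := by
        rw [mul_sum]
        simp only [mul_add, sum_add_distrib, add_sub_cancel_left, mul_comm]

theorem sum_indicator_setOf_rel_eq_sum_fibre (μ : S → ℝ) (u : S) :
    ∑ x, Set.indicator {x | u ≈ x} μ x = ∑ x with ⟦x⟧ = ⟦u⟧, μ x := by
  rw [sum_filter]
  refine sum_congr rfl fun x _ => ?_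
  simp only [Set.indicator_apply, Set.mem_ofPred_eq, Quotient.eq]
  exact if_congr ⟨Setoid.symm, Setoid.symm⟩ rfl rfl

end FibreSums

theorem le_of_oscillation_le_mul {S : Type*} [Finite S] (rel : S → S → Prop) {V : S → ℝ} {γ : ℝ}
    (hγ : γ < 1)
    (hV : ∀ D, (∀ x y, rel x y → V x ≤ V y + D) → ∀ x y, rel x y → V x ≤ V y + γ * D)
    {s t : S} (hst : rel s t) : V s ≤ V t := by
  obtain ⟨⟨u, v⟩, huv, hmax⟩ := Set.exists_max_image {p : S × S | rel p.1 p.2}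
    (fun p => V p.1 - V p.2) (Set.toFinite _) ⟨(s, t), hst⟩
  have hgap : ∀ x y, rel x y → V x ≤ V y + (V u - V v) := fun x y hxy => by
    linarith [hmax (x, y) hxy]
  have hgap_nonpos : V u - V v ≤ 0 := by nlinarith [hV _ hgap u v huv]
  linarith [hgap s t hst]

section Bellman

variable {S A : Type*} [Fintype S] [Fintype A] [Nonempty A] [r : Setoid S]
  [DecidableRel ((· ≈ ·) : S → S → Prop)] {R : S → A → ℝ} {P : S → A → S → ℝ} {γ : ℝ} {V : S → ℝ}

theorem bellman_le_add_mul_of_bisim (hP : ∀ s a, IsProb (P s a)) (hγ : 0 ≤ γ)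
    (hV : ∀ s, V s = univ.sup' univ_nonempty (fun a => R s a + γ * ∑ s', P s a s' * V s'))
    {D : ℝ} (hD : ∀ x y, x ≈ y → V x ≤ V y + D) {u v : S}
    (hR : ∀ a, R u a = R v a)
    (hPuv : ∀ a (q : Quotient r), ∑ x with ⟦x⟧ = q, P u a x = ∑ x with ⟦x⟧ = q, P v a x) :
    V u ≤ V v + γ * D := by
  rw [hV u]
  refine sup'_le _ _ fun a _ => ?_
  have hstep : ∑ x, P u a x * V x - ∑ x, P v a x * V x ≤ D := by
    simpa [(hP v a).2] using sum_mul_sub_sum_mul_le_of_class_masses_eq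
      (hP u a).1 (hP v a).1 (hPuv a) hD
  have hv : R v a + γ * ∑ x, P v a x * V x ≤ V v := by
    rw [hV v]; exact le_sup' (fun a => R v a + γ * ∑ s', P v a s' * V s') (mem_univ a)
  rw [hR a]
  linarith [mul_le_mul_of_nonneg_left hstep hγ]

end Bellman

theorem bisimulation_relation_implies_equal_optimal_values_general
    {S A : Type*} [Fintype S] [Fintype A] [Nonempty A]
    (R : S → A → ℝ) (P : S → A → S → ℝ) (hP : ∀ s a, IsProb (P s a))
    (γ : ℝ) (hγ0 : 0 ≤ γ) (hγ1 : γ < 1)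
    (E : S → S → Prop) (hE : Equivalence E)
    (hR : ∀ s t, E s t → ∀ a, R s a = R t a)
    (hPr : ∀ s t, E s t → ∀ a (u : S),
      ∑ s', Set.indicator {x | E u x} (P s a) s' =
      ∑ s', Set.indicator {x | E u x} (P t a) s')
    (V : S → ℝ)
    (hV : ∀ s, V s = univ.sup' univ_nonempty
      (fun a => R s a + γ * ∑ s', P s a s' * V s')) :
    ∀ s t, E s t → V s = V t := by
  classical
  let r : Setoid S := ⟨E, hE⟩
  have hPq (s t : S) (hst : E s t) (a : A) (q : Quotient r) :
      ∑ x with ⟦x⟧ = q, P s a x = ∑ x with ⟦x⟧ = q, P t a x := by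
    induction q using Quotient.ind with
    | _ u =>
      rw [← sum_indicator_setOf_rel_eq_sum_fibre, ← sum_indicator_setOf_rel_eq_sum_fibre]
      exact hPr s t hst a u
  have hcontr (D : ℝ) (hD : ∀ x y, E x y → V x ≤ V y + D) (u v : S) (huv : E u v) :
      V u ≤ V v + γ * D :=
    bellman_le_add_mul_of_bisim hP hγ0 hV hD (hR u v huv) (hPq u v huv)
  intro s t hst
  exact le_antisymm (le_of_oscillation_le_mul E hγ1 hcontr hst)
    (le_of_oscillation_le_mul E hγ1 hcontr (hE.symm hst))

theorem bisimulation_relation_implies_equal_optimal_values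
    {S A : Type*} [Fintype S] [Fintype A] [Nonempty S] [Nonempty A]
    (R : S → A → ℝ) (P : S → A → S → ℝ) (hP : ∀ s a, IsProb (P s a))
    (γ : ℝ) (hγ0 : 0 ≤ γ) (hγ1 : γ < 1)
    (E : S → S → Prop) (hE : Equivalence E)
    (hR : ∀ s t, E s t → ∀ a, R s a = R t a)
    (hPr : ∀ s t, E s t → ∀ a (u : S),
      ∑ s', Set.indicator {x | E u x} (P s a) s' =
      ∑ s', Set.indicator {x | E u x} (P t a) s')
    (V : S → ℝ)
    (hV : ∀ s, V s = univ.sup' univ_nonempty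
      (fun a => R s a + γ * ∑ s', P s a s' * V s')) :
    ∀ s t, E s t → V s = V t :=
  bisimulation_relation_implies_equal_optimal_values_general R P hP γ hγ0 hγ1 E hE hR hPr V hV
end

section
/- If E is a π-bisimulation relation (whenever (s,t) ∈ E: R^π_s = R^π_t and P^π_s(C) = P^π_t(C) for every E-equivalence class C), then for any E-related states s, t, V^π(s) = V^π(t). -/
open Finset

theorem pi_bisimulation_relation_implies_equal_values
    {S A : Type*} [Fintype S] [Fintype A] [Nonempty S] [Nonempty A]
    (R : S → A → ℝ) (P : S → A → S → ℝ) (hP : ∀ s a, IsProb (P s a))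
    (pol : S → A → ℝ) (hpol : ∀ s, IsProb (pol s))
    (γ : ℝ) (hγ0 : 0 ≤ γ) (hγ1 : γ < 1)
    (E : S → S → Prop) (hE : Equivalence E)
    (hR : ∀ s t, E s t → Rpi R pol s = Rpi R pol t)
    (hPr : ∀ s t, E s t → ∀ u : S,
      ∑ s', Set.indicator {x | E u x} (Ppi P pol s) s' =
      ∑ s', Set.indicator {x | E u x} (Ppi P pol t) s')
    (V : S → ℝ)
    (hV : ∀ s, V s = Rpi R pol s + γ * ∑ s', Ppi P pol s s' * V s') :
    ∀ s t, E s t → V s = V t := by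
  classical
  -- nonnegativity and normalization of Ppi
  have hP0 : ∀ s s', 0 ≤ Ppi P pol s s' := fun s s' =>
    Finset.sum_nonneg fun a _ => mul_nonneg ((hpol s).1 a) ((hP s a).1 s')
  have hP1 : ∀ s, ∑ s', Ppi P pol s s' = 1 := by
    intro s
    calc ∑ s', ∑ a, pol s a * P s a s'
        = ∑ a, ∑ s', pol s a * P s a s' := Finset.sum_comm
      _ = ∑ a, pol s a * ∑ s', P s a s' := by
          refine Finset.sum_congr rfl fun a _ => ?_
          rw [Finset.mul_sum]
      _ = ∑ a, pol s a := by
          refine Finset.sum_congr rfl fun a _ => ?_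
          rw [(hP s a).2, mul_one]
      _ = 1 := (hpol s).2
  -- the setoid and quotient
  let sE : Setoid S := ⟨E, hE⟩
  have hiff : ∀ (q : Quotient sE) (s' : S), (Quotient.mk sE s' = q) ↔ E q.out s' := by
    intro q s'
    constructor
    · intro h
      exact hE.symm (Quotient.exact (h.trans (Quotient.out_eq q).symm))
    · intro h
      rw [← Quotient.out_eq q]
      exact Quotient.sound (hE.symm h)
  -- indicator sums are class sums
  have hind : ∀ (s : S) (q : Quotient sE),
      ∑ s', Set.indicator {x | E q.out x} (Ppi P pol s) s'
        = ∑ s' ∈ univ.filter (fun s' => Quotient.mk sE s' = q), Ppi P pol s s' := by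
    intro s q
    rw [Finset.sum_filter]
    refine Finset.sum_congr rfl fun s' _ => ?_
    by_cases h : E q.out s'
    · simp [Set.indicator_apply, h, (hiff q s').2 h]
    · have h2 : ¬ (Quotient.mk sE s' = q) := fun hq => h ((hiff q s').1 hq)
      simp [Set.indicator_apply, h, h2]
  -- key: class-constant functions integrate equally
  have key : ∀ (f : S → ℝ), (∀ a b, E a b → f a = f b) → ∀ s t, E s t →
      ∑ s', Ppi P pol s s' * f s' = ∑ s', Ppi P pol t s' * f s' := by
    intro f hf s t hst
    have decomp : ∀ u : S, ∑ s', Ppi P pol u s' * f s'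
        = ∑ q : Quotient sE, f q.out *
            ∑ s', Set.indicator {x | E q.out x} (Ppi P pol u) s' := by
      intro u
      rw [← Finset.sum_fiberwise univ (fun s' => Quotient.mk sE s')
        (fun s' => Ppi P pol u s' * f s')]
      refine Finset.sum_congr rfl fun q _ => ?_
      rw [hind u q, Finset.mul_sum]
      refine Finset.sum_congr rfl fun s' hs' => ?_
      have hmem : E q.out s' := (hiff q s').1 (Finset.mem_filter.mp hs').2
      rw [hf q.out s' hmem, mul_comm]
    rw [decomp s, decomp t]
    refine Finset.sum_congr rfl fun q _ => ?_
    rw [hPr s t hst q.out]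
  -- the max gap D over related pairs
  let Pr : Finset (S × S) := univ.filter fun p => E p.1 p.2
  have hPne : Pr.Nonempty := by
    refine ⟨(Classical.arbitrary S, Classical.arbitrary S), ?_⟩
    simp [Pr, hE.refl]
  set D : ℝ := Pr.sup' hPne fun p => V p.1 - V p.2 with hDdef
  have hpairD : ∀ s t, E s t → V s - V t ≤ D := by
    intro s t hst
    exact Finset.le_sup' (f := fun p : S × S => V p.1 - V p.2) (b := (s, t))
      (by simp [Pr, hst])
  have hD0 : 0 ≤ D := by
    have h := hpairD (Classical.arbitrary S) (Classical.arbitrary S) (hE.refl _)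
    linarith
  -- class max function
  have hne : ∀ s' : S, (univ.filter (fun u => E s' u)).Nonempty :=
    fun s' => ⟨s', by simp [hE.refl s']⟩
  let f : S → ℝ := fun s' => (univ.filter (fun u => E s' u)).sup' (hne s') V
  have hfconst : ∀ a b, E a b → f a = f b := by
    intro a b hab
    have hfilter : univ.filter (fun u => E a u) = univ.filter (fun u => E b u) := by
      ext u
      simp only [Finset.mem_filter, Finset.mem_univ, true_and]
      exact ⟨fun h => hE.trans (hE.symm hab) h, fun h => hE.trans hab h⟩
    exact Finset.sup'_congr (hne a) hfilter fun _ _ => rfl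
  have hVf : ∀ s', V s' ≤ f s' := fun s' =>
    Finset.le_sup' V (by simp [hE.refl s'])
  have hfD : ∀ s', f s' ≤ V s' + D := by
    intro s'
    obtain ⟨u, hu, hequ⟩ := Finset.exists_mem_eq_sup' (hne s') V
    have hEu : E u s' := hE.symm ((Finset.mem_filter.mp hu).2)
    have := hpairD u s' hEu
    simp only [f]
    rw [hequ]
    linarith
  -- main estimate
  have main : ∀ s t, E s t → V s - V t ≤ γ * D := by
    intro s t hst
    have h1 : ∑ s', Ppi P pol s s' * V s' ≤ ∑ s', Ppi P pol s s' * f s' :=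
      Finset.sum_le_sum fun i _ => mul_le_mul_of_nonneg_left (hVf i) (hP0 s i)
    have h2 : ∑ s', Ppi P pol s s' * f s' = ∑ s', Ppi P pol t s' * f s' :=
      key f hfconst s t hst
    have h3 : ∑ s', Ppi P pol t s' * f s' ≤ ∑ s', Ppi P pol t s' * (V s' + D) :=
      Finset.sum_le_sum fun i _ => mul_le_mul_of_nonneg_left (hfD i) (hP0 t i)
    have h4 : ∑ s', Ppi P pol t s' * (V s' + D)
        = (∑ s', Ppi P pol t s' * V s') + D := by
      simp only [mul_add, Finset.sum_add_distrib, ← Finset.sum_mul, hP1 t, one_mul]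
    have hdiff : (∑ s', Ppi P pol s s' * V s') - (∑ s', Ppi P pol t s' * V s') ≤ D := by
      linarith
    have hVs : V s - V t = γ * ((∑ s', Ppi P pol s s' * V s')
        - (∑ s', Ppi P pol t s' * V s')) := by
      rw [hV s, hV t, hR s t hst]; ring
    rw [hVs]
    exact mul_le_mul_of_nonneg_left hdiff hγ0
  have hcontr : D ≤ γ * D := by
    refine Finset.sup'_le hPne _ fun p hp => ?_
    exact main p.1 p.2 ((Finset.mem_filter.mp hp).2)
  have hDle : D ≤ 0 := by nlinarith
  intro s t hst
  have h1 := hpairD s t hst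
  have h2 := hpairD t s (hE.symm hst)
  linarith
end
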